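/- Suppose $k, k'$ are integers and $g_1$ a nonnegative integer with $k k' = g_1$. Suppose further there exist positive reals $\alpha_0, t_0$ with $\alpha_0 > k t_0$ and $\alpha_0 + (2 - 2k) t_0 > \frac{g_1}{k}\alpha_0 - g_1 t_0 + t_0 > 0$ whenever $k \neq 0$ (interpreting $\frac{g_1}{k}$ as an integer $m$ with $g_1 = mk$). Then $g_1 = 0$. -/
import Mathlib


/-- Positivity argument of Lemma 10: if `k k' = g₁ ≥ 0` and there exist
positive reals `α₀, t₀` with `α₀ > k t₀`, and whenever `k ≠ 0` the integer
`m = g₁ / k` satisfies `α₀ + (2 - 2k) t₀ > m α₀ - g₁ t₀ + t₀ > 0`,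
then `g₁ = 0`. -/
theorem stmt_6 (k k' g1 : ℤ) (hg1 : 0 ≤ g1) (hkk : k * k' = g1)
    (α0 t0 : ℝ) (hα : 0 < α0) (ht : 0 < t0)
    (h1 : (k : ℝ) * t0 < α0)
    (h2 : k ≠ 0 → ∃ m : ℤ, g1 = m * k ∧
      (m : ℝ) * α0 - (g1 : ℝ) * t0 + t0 > 0 ∧
      α0 + (2 - 2 * (k : ℝ)) * t0 > (m : ℝ) * α0 - (g1 : ℝ) * t0 + t0) :
    g1 = 0 := by
  by_contra hne
  have hg1' : 0 < g1 := lt_of_le_of_ne hg1 (Ne.symm hne)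
  have hk0 : k ≠ 0 := by rintro rfl; omega
  obtain ⟨m, hm, hpos, hineq⟩ := h2 hk0
  have hmk : 0 < m * k := hm ▸ hg1'
  have hmR : (g1 : ℝ) = (m : ℝ) * k := by exact_mod_cast hm
  rcases lt_or_gt_of_ne hk0 with hk | hk
  · have hm' : m ≤ -1 := by nlinarith
    have hkR : (k : ℝ) ≤ -1 := by
      have h : k + 1 ≤ 0 := by omega
      have := (Int.cast_nonpos (R := ℝ)).mpr h
      push_cast at this; linarith
    have hmR' : (m : ℝ) ≤ -1 := by
      have h : m + 1 ≤ 0 := by omega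
      have := (Int.cast_nonpos (R := ℝ)).mpr h
      push_cast at this; linarith
    nlinarith [mul_nonneg (sub_nonneg.mpr hmR') (sub_nonneg.mpr h1.le),
      mul_nonneg (sub_nonneg.mpr hkR) ht.le]
  · have hk1 : 1 ≤ k := hk
    have hm1 : 1 ≤ m := by nlinarith
    have hkR : (1 : ℝ) ≤ k := by exact_mod_cast hk1
    have hmR' : (1 : ℝ) ≤ m := by exact_mod_cast hm1
    nlinarith [mul_nonneg (sub_nonneg.mpr hmR') (sub_nonneg.mpr h1.le),
      mul_nonneg (sub_nonneg.mpr hkR) ht.le]
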